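/- arXiv:1402.0809 — 4 statements merged into one kernel-verified Lean document; each statement's English description precedes it below -/
import Mathlib

section
/- For every real number v, the supremum over λ ∈ ℝ of the quantity λ·v − (e^λ + e^{−λ} − 2) equals v·log((v + √(v² + 4))/2) − √(v² + 4) + 2, and this supremum is attained at λ_v = log((v + √(v² + 4))/2). -/
/-- The Fenchel–Legendre transform of `H(λ) = e^λ + e^{-λ} - 2` is
`L(v) = v·log((v + √(v² + 4))/2) − √(v² + 4) + 2`, and the supremum defining it
is attained at `λ_v = log((v + √(v² + 4))/2)`. -/
theorem legendre_transform_of_H (v : ℝ) :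
    IsGreatest
      (Set.range fun l : ℝ => l * v - (Real.exp l + Real.exp (-l) - 2))
      (v * Real.log ((v + Real.sqrt (v ^ 2 + 4)) / 2) - Real.sqrt (v ^ 2 + 4) + 2) ∧
    Real.log ((v + Real.sqrt (v ^ 2 + 4)) / 2) * v -
        (Real.exp (Real.log ((v + Real.sqrt (v ^ 2 + 4)) / 2)) +
          Real.exp (-Real.log ((v + Real.sqrt (v ^ 2 + 4)) / 2)) - 2) =
      v * Real.log ((v + Real.sqrt (v ^ 2 + 4)) / 2) - Real.sqrt (v ^ 2 + 4) + 2 := by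
  set s : ℝ := Real.sqrt (v ^ 2 + 4) with hs
  have hs2 : s ^ 2 = v ^ 2 + 4 := Real.sq_sqrt (by positivity)
  have hsv : -v < s := by
    nlinarith [Real.sqrt_nonneg (v ^ 2 + 4), abs_nonneg v, sq_abs v,
      neg_abs_le v]
  set t : ℝ := (v + s) / 2 with ht
  have htpos : 0 < t := by simp only [ht]; linarith
  have hinv : 1 / t = (s - v) / 2 := by
    rw [div_eq_div_iff (ne_of_gt htpos) (by norm_num : (2:ℝ) ≠ 0)]
    nlinarith
  have hsum : t + 1 / t = s := by rw [hinv]; ring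
  have hel : Real.exp (Real.log t) = t := Real.exp_log htpos
  have heln : Real.exp (-Real.log t) = 1 / t := by
    rw [Real.exp_neg, hel, one_div]
  have hval : Real.log t * v - (Real.exp (Real.log t) + Real.exp (-Real.log t) - 2)
      = v * Real.log t - s + 2 := by
    rw [hel, heln, ← hsum]; ring
  refine ⟨⟨⟨Real.log t, hval⟩, ?_⟩, hval⟩
  rintro y ⟨l, rfl⟩
  simp only
  set x : ℝ := l - Real.log t with hx
  have hexl : Real.exp l = t * Real.exp x := by
    rw [hx, Real.exp_sub, hel]; field_simp
  have hexln : Real.exp (-l) = (1 / t) * Real.exp (-x) := by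
    rw [Real.exp_neg, hexl, mul_inv, ← Real.exp_neg]
    ring
  have h1 : x + 1 ≤ Real.exp x := Real.add_one_le_exp x
  have h2 : -x + 1 ≤ Real.exp (-x) := Real.add_one_le_exp (-x)
  have hl : l = x + Real.log t := by rw [hx]; ring
  have htv : t - 1 / t = v := by rw [hinv]; ring
  rw [hexl, hexln, hl]
  have hinvpos : 0 < 1 / t := by positivity
  have h3 : t * (x + 1) + (1 / t) * (-x + 1) = x * v + s := by
    linear_combination x * htv + hsum
  nlinarith [mul_le_mul_of_nonneg_left h1 htpos.le,
    mul_le_mul_of_nonneg_left h2 hinvpos.le]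
end

section
/- For every real number p, the supremum over v ∈ ℝ of p·v − L(v), where L(v) = v·log((v + √(v² + 4))/2) − √(v² + 4) + 2, equals e^p + e^{−p} − 2; that is, the Fenchel–Legendre transform of L is H. -/
/-- The Fenchel–Legendre transform of
`L(v) = v·log((v + √(v² + 4))/2) − √(v² + 4) + 2` is `H(p) = e^p + e^{−p} − 2`:
for every `p`, `sup_{v∈ℝ} { p·v − L(v) } = e^p + e^{−p} − 2`. -/
theorem legendre_transform_of_L (p : ℝ) :
    IsLUB
      (Set.range fun v : ℝ => p * v -
        (v * Real.log ((v + Real.sqrt (v ^ 2 + 4)) / 2) - Real.sqrt (v ^ 2 + 4) + 2))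
      (Real.exp p + Real.exp (-p) - 2) := by
  constructor
  · rintro _ ⟨v, rfl⟩
    simp only
    set s := Real.sqrt (v ^ 2 + 4) with hs
    have hs0 : 0 ≤ s := Real.sqrt_nonneg _
    have hs2 : s ^ 2 = v ^ 2 + 4 := Real.sq_sqrt (by positivity)
    have hsv : |v| < s := by
      rw [hs, ← Real.sqrt_sq_eq_abs]
      exact Real.sqrt_lt_sqrt (by positivity) (by linarith)
    have hvs : 0 < v + s := by
      have := abs_lt.mp hsv
      linarith [this.1]
    set t := (v + s) / 2 with ht
    have ht0 : 0 < t := by positivity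
    set q := Real.log t with hq
    have hexpq : Real.exp q = t := Real.exp_log ht0
    have hexpnq : Real.exp (-q) = 1 / t := by
      rw [Real.exp_neg, hexpq]; exact (one_div t).symm
    have h1 : t * (1 + (p - q)) ≤ Real.exp p := by
      have := Real.add_one_le_exp (p - q)
      calc t * (1 + (p - q)) ≤ t * Real.exp (p - q) := by
            apply mul_le_mul_of_nonneg_left _ ht0.le
            linarith
        _ = Real.exp p := by rw [← hexpq, ← Real.exp_add]; ring_nf
    have h2 : (1 / t) * (1 + (q - p)) ≤ Real.exp (-p) := by
      have := Real.add_one_le_exp (q - p)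
      calc (1 / t) * (1 + (q - p)) ≤ (1 / t) * Real.exp (q - p) := by
            apply mul_le_mul_of_nonneg_left _ (by positivity)
            linarith
        _ = Real.exp (-p) := by
            rw [← hexpnq, ← Real.exp_add]; ring_nf
    -- v = t - 1/t, s = t + 1/t
    have hvt : v = t - 1 / t := by
      have h4 : (s - v) * (s + v) = 4 := by nlinarith
      field_simp [ht]
      nlinarith
    have hst : s = t + 1 / t := by
      have h4 : (s - v) * (s + v) = 4 := by nlinarith
      field_simp [ht]
      nlinarith
    have htne : t ≠ 0 := ht0.ne'
    rw [hvt, hst] at *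
    have e1 : t * (1 + (p - q)) = t + t * p - t * q := by ring
    nlinarith [h1, h2, mul_pos ht0 ht0]
  · intro b hb
    have hmem : Real.exp p + Real.exp (-p) - 2 ∈
        (Set.range fun v : ℝ => p * v -
          (v * Real.log ((v + Real.sqrt (v ^ 2 + 4)) / 2) - Real.sqrt (v ^ 2 + 4) + 2)) := by
      refine ⟨Real.exp p - Real.exp (-p), ?_⟩
      dsimp only
      have h4 : (Real.exp p - Real.exp (-p)) ^ 2 + 4 = (Real.exp p + Real.exp (-p)) ^ 2 := by
        have : Real.exp p * Real.exp (-p) = 1 := by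
          rw [← Real.exp_add]; simp
        nlinarith
      rw [h4, Real.sqrt_sq (by positivity)]
      have : (Real.exp p - Real.exp (-p) + (Real.exp p + Real.exp (-p))) / 2 = Real.exp p := by
        ring
      rw [this, Real.log_exp]
      ring
    exact hb hmem
end

section
/- Let V : ℝ → ℝ be continuous and periodic with period 1. For each integer k ≥ 1 define λ_k = sup over ψ : ℤ/kℤ → ℝ with (1/k)·∑_j ψ(j)² = 1 of { −∑_{j ∈ ℤ/kℤ}(ψ(j+1) − ψ(j))² + ∑_{j ∈ ℤ/kℤ} ψ(j)²·V(j/k) }. Then lim_{k→∞} (1/k)·λ_k = sup_{x ∈ [0,1]} V(x). -/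
/-!
The upper bound `λ_k ≤ k · max V` is immediate, since the Dirichlet term is nonnegative.
For the lower bound, test the Rayleigh quotient on `ψ(j) = f(j/k)`, where `f` is a
`1`-periodic Lipschitz tent around a maximiser of `V`, supported where `V > max V - ε`;
periodicity makes the edge from `k - 1` back to `0` behave like every other edge.
Its Dirichlet energy is `O(L²/k)` while `∑ ψ(j)² ≥ 1/4` (some grid point lies within `1/k`
of the peak), so the quotient is at least `max V - ε - O(1/k)`.
-/

open Finset Function Filter
open scoped NNReal

noncomputable section DiscreteCircle

variable {n : ℕ} [NeZero n]

def dirichletForm (ψ : ZMod n → ℝ) : ℝ := ∑ j, (ψ (j + 1) - ψ j) ^ 2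

def potentialForm (V : ℝ → ℝ) (ψ : ZMod n → ℝ) : ℝ := ∑ j, ψ j ^ 2 * V ((j.val : ℝ) / n)

variable (n) in
def rayleighValues (V : ℝ → ℝ) : Set ℝ :=
  {y | ∃ ψ : ZMod n → ℝ, (1 / (n : ℝ)) * ∑ j, ψ j ^ 2 = 1 ∧
    y = -dirichletForm ψ + potentialForm V ψ}

def rayleighQuotient (V : ℝ → ℝ) (ψ : ZMod n → ℝ) : ℝ :=
  (-dirichletForm ψ + potentialForm V ψ) / ∑ j, ψ j ^ 2

lemma dirichletForm_const_mul (c : ℝ) (ψ : ZMod n → ℝ) :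
    dirichletForm (fun j => c * ψ j) = c ^ 2 * dirichletForm ψ := by
  simp only [dirichletForm, ← mul_sub, mul_pow, mul_sum]

lemma potentialForm_const_mul (V : ℝ → ℝ) (c : ℝ) (ψ : ZMod n → ℝ) :
    potentialForm V (fun j => c * ψ j) = c ^ 2 * potentialForm V ψ := by
  simp only [potentialForm, mul_pow, mul_sum, mul_assoc]

lemma natCast_mul_rayleighQuotient_mem {V : ℝ → ℝ} {ψ : ZMod n → ℝ} (hψ : ∑ j, ψ j ^ 2 ≠ 0) :
    n * rayleighQuotient V ψ ∈ rayleighValues n V := by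
  have hn : (0 : ℝ) < n := by exact_mod_cast Nat.pos_of_neZero n
  have hc : √(n / ∑ j, ψ j ^ 2) ^ 2 = n / ∑ j, ψ j ^ 2 :=
    Real.sq_sqrt (div_nonneg hn.le (sum_nonneg fun j _ => sq_nonneg _))
  refine ⟨fun j => √(n / ∑ j, ψ j ^ 2) * ψ j, ?_, ?_⟩
  · simp only [mul_pow, ← mul_sum, hc]
    field_simp
  · rw [dirichletForm_const_mul, potentialForm_const_mul, hc, rayleighQuotient]
    ring

lemma le_of_mem_rayleighValues {V : ℝ → ℝ} {M y : ℝ} (hM : ∀ j : ZMod n, V (j.val / n) ≤ M)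
    (hy : y ∈ rayleighValues n V) : y ≤ n * M := by
  obtain ⟨ψ, hψ, rfl⟩ := hy
  have hn : (n : ℝ) ≠ 0 := NeZero.ne _
  have hD : 0 ≤ dirichletForm ψ := sum_nonneg fun j _ => sq_nonneg _
  have hP : potentialForm V ψ ≤ n * M := calc
    potentialForm V ψ ≤ ∑ j, ψ j ^ 2 * M :=
      sum_le_sum fun j _ => mul_le_mul_of_nonneg_left (hM j) (sq_nonneg _)
    _ = n * M := by rw [← sum_mul]; field_simp at hψ; rw [hψ]
  linarith

lemma bddAbove_rayleighValues (V : ℝ → ℝ) : BddAbove (rayleighValues n V) := by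
  obtain ⟨M, hM⟩ := (Set.finite_range fun j : ZMod n => V (j.val / n)).bddAbove
  exact ⟨n * M, fun y => le_of_mem_rayleighValues fun j => hM ⟨j, rfl⟩⟩

lemma rayleighQuotient_le_sSup {V : ℝ → ℝ} {ψ : ZMod n → ℝ} (hψ : ∑ j, ψ j ^ 2 ≠ 0) :
    rayleighQuotient V ψ ≤ (1 / n) * sSup (rayleighValues n V) := by
  have hn : (0 : ℝ) < n := by exact_mod_cast Nat.pos_of_neZero n
  rw [one_div, le_inv_mul_iff₀ hn]
  exact le_csSup (bddAbove_rayleighValues V) (natCast_mul_rayleighQuotient_mem hψ)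

lemma sSup_rayleighValues_le {V : ℝ → ℝ} {M : ℝ} (hM : ∀ x, V x ≤ M) :
    (1 / n) * sSup (rayleighValues n V) ≤ M := by
  have hn : (0 : ℝ) < n := by exact_mod_cast Nat.pos_of_neZero n
  have hne : ∑ _j : ZMod n, (1 : ℝ) ^ 2 ≠ 0 := by simpa using NeZero.ne n
  rw [one_div, inv_mul_le_iff₀ hn]
  exact csSup_le ⟨_, natCast_mul_rayleighQuotient_mem hne⟩
    fun y => le_of_mem_rayleighValues fun j => hM _

lemma Function.Periodic.apply_val_intCast_div {f : ℝ → ℝ} (hf : Periodic f 1) (m : ℤ) :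
    f (((m : ZMod n).val : ℝ) / n) = f (m / n) := by
  have hn : (n : ℝ) ≠ 0 := NeZero.ne _
  have hval : (((m : ZMod n).val : ℤ) : ℝ) = ((m % n : ℤ) : ℝ) := by rw [ZMod.val_intCast]
  have hgrid : ((m : ZMod n).val : ℝ) / n = m / n - (m / n : ℤ) * 1 := by
    push_cast at hval
    rw [hval, Int.emod_def]
    push_cast
    field_simp
  rw [hgrid, hf.sub_int_mul_eq]

lemma Function.Periodic.apply_val_add_one_div {f : ℝ → ℝ} (hf : Periodic f 1) (j : ZMod n) :
    f (((j + 1).val : ℝ) / n) = f ((j.val + 1) / n) := by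
  have hj : j + 1 = (((j.val + 1 : ℕ) : ℤ) : ZMod n) := by push_cast; rw [ZMod.natCast_zmod_val]
  rw [hj, hf.apply_val_intCast_div]
  push_cast
  rfl

lemma dirichletForm_le_of_lipschitzWith {f : ℝ → ℝ} {L : ℝ≥0} (hf : Periodic f 1)
    (hL : LipschitzWith L f) :
    dirichletForm (fun j : ZMod n => f (j.val / n)) ≤ L ^ 2 / n := by
  have hn : (0 : ℝ) < n := by exact_mod_cast Nat.pos_of_neZero n
  have hstep : ∀ j : ZMod n, (f (((j + 1).val : ℝ) / n) - f (j.val / n)) ^ 2 ≤ (L / n) ^ 2 := by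
    intro j
    rw [hf.apply_val_add_one_div, ← sq_abs]
    gcongr
    calc |f ((j.val + 1) / n) - f (j.val / n)|
        ≤ L * |((j.val : ℝ) + 1) / n - j.val / n| := by
          simpa only [Real.dist_eq] using hL.dist_le_mul _ _
      _ = L / n := by
          rw [← sub_div, add_sub_cancel_left, abs_of_pos (one_div_pos.2 hn), mul_one_div]
  calc dirichletForm (fun j : ZMod n => f (j.val / n))
      ≤ ∑ _j : ZMod n, (L / n : ℝ) ^ 2 := sum_le_sum fun j _ => hstep j
    _ = L ^ 2 / n := by simp only [sum_const, card_univ, ZMod.card, nsmul_eq_mul]; field_simp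

lemma exists_dist_apply_val_div_le {f : ℝ → ℝ} {L : ℝ≥0} (hf : Periodic f 1)
    (hL : LipschitzWith L f) (x : ℝ) : ∃ j : ZMod n, dist (f (j.val / n)) (f x) ≤ L / n := by
  have hn : (0 : ℝ) < n := by exact_mod_cast Nat.pos_of_neZero n
  refine ⟨(⌊n * x⌋ : ZMod n), ?_⟩
  rw [hf.apply_val_intCast_div]
  have hfloor : |(⌊n * x⌋ : ℝ) / n - x| ≤ 1 / n := by
    have h₁ := Int.floor_le (n * x)
    have h₂ := Int.lt_floor_add_one (n * x)
    rw [div_sub' hn.ne', abs_div, abs_of_pos hn, div_le_div_iff_of_pos_right hn, abs_le]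
    constructor <;> linarith
  calc dist (f (⌊n * x⌋ / n)) (f x) ≤ L * dist ((⌊n * x⌋ : ℝ) / n) x := hL.dist_le_mul _ _
    _ ≤ L * (1 / n) := by rw [Real.dist_eq]; gcongr
    _ = L / n := by ring

lemma sub_le_sSup_rayleighValues {V f : ℝ → ℝ} {L : ℝ≥0} {x₀ m : ℝ} (hf : Periodic f 1)
    (hL : LipschitzWith L f) (hf₀ : f x₀ = 1) (hfV : ∀ x, f x ≠ 0 → m ≤ V x) (hn : 2 * L ≤ n) :
    m - 4 * L ^ 2 / n ≤ (1 / n) * sSup (rayleighValues n V) := by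
  have hn₀ : (0 : ℝ) < n := by exact_mod_cast Nat.pos_of_neZero n
  set ψ : ZMod n → ℝ := fun j => f (j.val / n)
  have hS : 1 / 4 ≤ ∑ j, ψ j ^ 2 := by
    obtain ⟨j, hj⟩ := exists_dist_apply_val_div_le (n := n) hf hL x₀
    have hLn : (L : ℝ) / n ≤ 1 / 2 := by rw [div_le_iff₀ hn₀]; linarith
    have hψj : 1 / 2 ≤ ψ j := by
      rw [Real.dist_eq, hf₀, abs_le] at hj
      linarith [hj.1]
    calc (1 : ℝ) / 4 ≤ ψ j ^ 2 := by nlinarith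
      _ ≤ ∑ j, ψ j ^ 2 := single_le_sum (fun j _ => sq_nonneg (ψ j)) (mem_univ j)
  have hD : dirichletForm ψ ≤ L ^ 2 / n := dirichletForm_le_of_lipschitzWith hf hL
  have hP : m * ∑ j, ψ j ^ 2 ≤ potentialForm V ψ := by
    rw [mul_sum]
    refine sum_le_sum fun j _ => ?_
    rcases eq_or_ne (ψ j) 0 with hψ | hψ
    · simp [hψ]
    · rw [mul_comm]
      exact mul_le_mul_of_nonneg_left (hfV _ hψ) (sq_nonneg _)
  have hSpos : 0 < ∑ j, ψ j ^ 2 := lt_of_lt_of_le (by norm_num) hS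
  refine le_trans ?_ (rayleighQuotient_le_sSup hSpos.ne')
  rw [rayleighQuotient, le_div_iff₀ hSpos]
  have hL4 : (L : ℝ) ^ 2 / n ≤ 4 * L ^ 2 / n * ∑ j, ψ j ^ 2 := calc
    (L : ℝ) ^ 2 / n = 4 * L ^ 2 / n * (1 / 4) := by ring
    _ ≤ 4 * L ^ 2 / n * ∑ j, ψ j ^ 2 := by gcongr
  linarith

end DiscreteCircle

noncomputable def circleTent (x₀ δ x : ℝ) : ℝ :=
  max 0 (1 - ‖((x - x₀ : ℝ) : UnitAddCircle)‖ / δ)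

lemma circleTent_periodic (x₀ δ : ℝ) : Periodic (circleTent x₀ δ) 1 := by
  intro x
  rw [circleTent, circleTent, add_sub_right_comm, AddCircle.coe_add_period]

lemma circleTent_self (x₀ δ : ℝ) : circleTent x₀ δ x₀ = 1 := by
  simp [circleTent]

lemma lipschitzWith_circleTent (x₀ : ℝ) {δ : ℝ} (hδ : 0 < δ) :
    LipschitzWith (Real.toNNReal δ⁻¹) (circleTent x₀ δ) := by
  refine LipschitzWith.of_dist_le_mul fun x y => ?_
  rw [Real.coe_toNNReal _ (inv_nonneg.2 hδ.le), Real.dist_eq, Real.dist_eq, circleTent, circleTent,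
    max_comm 0, max_comm 0]
  refine (abs_max_sub_max_le_abs _ _ _).trans ?_
  have hcoe : ((y - x₀ : ℝ) : UnitAddCircle) - ((x - x₀ : ℝ) : UnitAddCircle) =
      ((y - x : ℝ) : UnitAddCircle) := by
    rw [← AddCircle.coe_sub, sub_sub_sub_cancel_right]
  calc |1 - ‖((x - x₀ : ℝ) : UnitAddCircle)‖ / δ - (1 - ‖((y - x₀ : ℝ) : UnitAddCircle)‖ / δ)|
      = δ⁻¹ * |‖((y - x₀ : ℝ) : UnitAddCircle)‖ - ‖((x - x₀ : ℝ) : UnitAddCircle)‖| := by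
        rw [← abs_of_pos (inv_pos.2 hδ), ← abs_mul]
        congr 1
        ring
    _ ≤ δ⁻¹ * |x - y| := by
        refine mul_le_mul_of_nonneg_left ?_ (inv_nonneg.2 hδ.le)
        rw [abs_sub_comm x y]
        refine (abs_norm_sub_norm_le _ _).trans ?_
        rw [hcoe]
        exact QuotientAddGroup.norm_mk_le_norm

lemma exists_int_abs_sub_lt_of_circleTent_ne_zero {x₀ δ x : ℝ} (hδ : 0 < δ)
    (hx : circleTent x₀ δ x ≠ 0) : ∃ m : ℤ, |x - m - x₀| < δ := by
  have hpos : 0 < 1 - ‖((x - x₀ : ℝ) : UnitAddCircle)‖ / δ := by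
    by_contra! h
    exact hx (max_eq_left h)
  refine ⟨round (x - x₀), ?_⟩
  rw [sub_pos, div_lt_one hδ, UnitAddCircle.norm_eq] at hpos
  rwa [sub_right_comm]

lemma eventually_lt_sSup_rayleighValues {V : ℝ → ℝ} (hV : Continuous V) (hper : Periodic V 1)
    {a x₀ : ℝ} (ha : a < V x₀) :
    ∀ᶠ k : ℕ in atTop, a < (1 / ((k + 1 : ℕ) : ℝ)) * sSup (rayleighValues (k + 1) V) := by
  obtain ⟨ε, hε, hεa⟩ : ∃ ε > 0, a < V x₀ - 2 * ε := ⟨(V x₀ - a) / 4, by linarith, by linarith⟩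
  obtain ⟨δ, hδ, hδV⟩ := Metric.continuous_iff.1 hV x₀ ε hε
  have hfV : ∀ x, circleTent x₀ δ x ≠ 0 → V x₀ - ε ≤ V x := by
    intro x hx
    obtain ⟨m, hm⟩ := exists_int_abs_sub_lt_of_circleTent_ne_zero hδ hx
    have hVm := hδV (x - m) (by rwa [Real.dist_eq])
    rw [Real.dist_eq, ← mul_one (m : ℝ), hper.sub_int_mul_eq, abs_lt] at hVm
    linarith [hVm.1]
  have hLip := lipschitzWith_circleTent x₀ hδ
  set L := Real.toNNReal δ⁻¹
  have hsmall : ∀ᶠ k : ℕ in atTop, 4 * (L : ℝ) ^ 2 / ((k + 1 : ℕ) : ℝ) < ε :=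
    ((tendsto_const_div_atTop_nhds_zero_nat _).comp (tendsto_add_atTop_nat 1)).eventually
      (gt_mem_nhds hε)
  have hlarge : ∀ᶠ k : ℕ in atTop, 2 * (L : ℝ) ≤ ((k + 1 : ℕ) : ℝ) :=
    (tendsto_natCast_atTop_atTop.comp (tendsto_add_atTop_nat 1)).eventually_ge_atTop _
  filter_upwards [hsmall, hlarge] with k hk hk'
  have := sub_le_sSup_rayleighValues (circleTent_periodic x₀ δ) hLip
    (circleTent_self x₀ δ) hfV hk'
  linarith

/-- For a continuous `1`-periodic potential `V`, the principal eigenvalue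
`λ_k = sup { −∑ (ψ(j+1) − ψ(j))² + ∑ ψ(j)²·V(j/k) : (1/k)∑ψ(j)² = 1 }` of
`k·L_k + k·V_k` satisfies `(1/k)·λ_k → sup_{x∈[0,1]} V(x)` as `k → ∞`. -/
theorem eigenvalue_limit (V : ℝ → ℝ) (hV : Continuous V)
    (hper : Function.Periodic V 1) :
    Filter.Tendsto
      (fun k : ℕ =>
        (1 / ((k : ℝ) + 1)) *
          sSup {y : ℝ | ∃ ψ : ZMod (k + 1) → ℝ,
            (1 / ((k : ℝ) + 1)) * ∑ j : ZMod (k + 1), ψ j ^ 2 = 1 ∧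
            y = -∑ j : ZMod (k + 1), (ψ (j + 1) - ψ j) ^ 2 +
              ∑ j : ZMod (k + 1), ψ j ^ 2 * V ((j.val : ℝ) / ((k : ℝ) + 1))})
      Filter.atTop (nhds (sSup (V '' Set.Icc 0 1))) := by
  set M := sSup (V '' Set.Icc 0 1)
  have hcpt : IsCompact (V '' Set.Icc 0 1) := isCompact_Icc.image hV
  have hM : ∀ x, V x ≤ M := by
    intro x
    obtain ⟨y, hy, hxy⟩ := hper.exists_mem_Ico₀ one_pos x
    exact hxy ▸ le_csSup hcpt.bddAbove ⟨y, Set.Ico_subset_Icc_self hy, rfl⟩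
  obtain ⟨x₀, -, hx₀⟩ : M ∈ V '' Set.Icc 0 1 :=
    hcpt.sSup_mem ((Set.nonempty_Icc.2 zero_le_one).image V)
  have hlim : Tendsto (fun k : ℕ => (1 / ((k + 1 : ℕ) : ℝ)) * sSup (rayleighValues (k + 1) V))
      atTop (nhds M) :=
    tendsto_order.2 ⟨fun a ha => eventually_lt_sSup_rayleighValues hV hper (hx₀ ▸ ha),
      fun b hb => Eventually.of_forall fun k => (sSup_rayleighValues_le hM).trans_lt hb⟩
  simpa [rayleighValues, dirichletForm, potentialForm] using hlim
end

section
/- Let T > 0, let L(v) = v·log((v + √(v² + 4))/2) − √(v² + 4) + 2, and let γ : [0,T] → ℝ be absolutely continuous. Then the supremum, over all finite partitions 0 = t₀ < t₁ < ⋯ < t_n = T, of ∑_{i=0}^{n−1} (t_{i+1} − t_i)·L( (γ(t_{i+1}) − γ(t_i)) / (t_{i+1} − t_i) ) equals ∫₀ᵀ L(γ'(s)) ds (as an identity in [0, +∞]). -/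
/-!
The rate function `L` is the convex conjugate of `H λ = 2 (cosh λ - 1)`: `λ v - H λ ≤ L v` for
all `λ`, with equality at `λ = arsinh (v / 2)`. Integrating this inequality with the `λ` that is
optimal for the mean slope of `γ` over a subinterval gives Jensen's inequality
`(b - a) L (slope) ≤ ∫ₐᵇ L (γ')`; summing over the subintervals bounds every partition sum by the
integral.

Conversely, for the uniform partition of mesh `T / n` the slopes are the averages of `γ'` over the
cells, and these converge to `γ'` almost everywhere by the Lebesgue differentiation theorem.
Fatou's lemma then bounds the integral by the `liminf` of these partition sums.
-/
open MeasureTheory Set Filter Topology Real Function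

noncomputable def rateFunction (v : ℝ) : ℝ :=
  v * log ((v + √(v ^ 2 + 4)) / 2) - √(v ^ 2 + 4) + 2

theorem rateFunction_eq_arsinh (v : ℝ) :
    rateFunction v = arsinh (v / 2) * v - 2 * (cosh (arsinh (v / 2)) - 1) := by
  have hsqrt : √(v ^ 2 + 4) = 2 * √(1 + (v / 2) ^ 2) := by
    rw [show v ^ 2 + 4 = 2 ^ 2 * (1 + (v / 2) ^ 2) by ring, sqrt_mul (by norm_num),
      sqrt_sq (by norm_num)]
  rw [rateFunction, cosh_arsinh, arsinh, hsqrt]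
  ring_nf

theorem cosh_add_sinh_mul_sub_le (a l : ℝ) : cosh a + sinh a * (l - a) ≤ cosh l := by
  have h₁ : exp a * (l - a + 1) ≤ exp l := by
    simpa [← exp_add] using mul_le_mul_of_nonneg_left (add_one_le_exp (l - a)) (exp_pos a).le
  have h₂ : exp (-a) * (a - l + 1) ≤ exp (-l) := by
    calc exp (-a) * (a - l + 1) ≤ exp (-a) * exp (a - l) := by gcongr; exact add_one_le_exp _
      _ = exp (-l) := by rw [← exp_add]; ring_nf
  rw [cosh_eq, cosh_eq, sinh_eq]
  linarith

theorem mul_sub_le_rateFunction (l v : ℝ) : l * v - 2 * (cosh l - 1) ≤ rateFunction v := by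
  rw [rateFunction_eq_arsinh]
  set a := arsinh (v / 2)
  have hv : v = 2 * sinh a := by rw [sinh_arsinh]; ring
  have := cosh_add_sinh_mul_sub_le a l
  rw [hv]
  linarith

theorem continuous_rateFunction : Continuous rateFunction := by
  have h : Continuous fun v : ℝ => arsinh (v / 2) * v - 2 * (cosh (arsinh (v / 2)) - 1) := by
    continuity
  exact h.congr fun v => (rateFunction_eq_arsinh v).symm

theorem ofReal_integral_le_lintegral_ofReal {α : Type*} [MeasurableSpace α] {μ : Measure α}
    (f : α → ℝ) : ENNReal.ofReal (∫ x, f x ∂μ) ≤ ∫⁻ x, ENNReal.ofReal (f x) ∂μ := by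
  by_cases hf : Integrable f μ
  · rw [integral_eq_lintegral_pos_part_sub_lintegral_neg_part hf]
    exact (ENNReal.ofReal_le_ofReal (sub_le_self _ ENNReal.toReal_nonneg)).trans
      ENNReal.ofReal_toReal_le
  · simp [integral_undef hf]

theorem ofReal_mul_rateFunction_average_le {α : Type*} [MeasurableSpace α] {μ : Measure α}
    [IsFiniteMeasure μ] {g : α → ℝ} (hg : Integrable g μ) :
    ENNReal.ofReal (μ.real univ * rateFunction (⨍ x, g x ∂μ)) ≤
      ∫⁻ x, ENNReal.ofReal (rateFunction (g x)) ∂μ := by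
  set l := arsinh ((⨍ x, g x ∂μ) / 2)
  have hdual :
      μ.real univ * rateFunction (⨍ x, g x ∂μ) = ∫ x, (l * g x - 2 * (cosh l - 1)) ∂μ := by
    rw [integral_sub (hg.const_mul l) (integrable_const _), integral_const_mul, integral_const,
      ← measure_smul_average, rateFunction_eq_arsinh, smul_eq_mul, smul_eq_mul]
    ring
  rw [hdual]
  exact (ofReal_integral_le_lintegral_ofReal _).trans
    (lintegral_mono fun x => ENNReal.ofReal_le_ofReal (mul_sub_le_rateFunction l (g x)))

theorem ofReal_mul_rateFunction_slope_le {g : ℝ → ℝ} {a b : ℝ} (hab : a < b)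
    (hg : IntegrableOn g (Ioc a b)) :
    ENNReal.ofReal ((b - a) * rateFunction ((∫ s in Ioc a b, g s) / (b - a))) ≤
      ∫⁻ s in Ioc a b, ENNReal.ofReal (rateFunction (g s)) := by
  have := ofReal_mul_rateFunction_average_le hg
  rwa [setAverage_eq, measureReal_restrict_apply_univ, Real.volume_real_Ioc_of_le hab.le,
    smul_eq_mul, inv_mul_eq_div] at this

noncomputable def partitionSum (γ : ℝ → ℝ) {n : ℕ} (t : Fin (n + 1) → ℝ) : ENNReal :=
  ∑ i : Fin n, ENNReal.ofReal ((t i.succ - t i.castSucc) *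
    rateFunction ((γ (t i.succ) - γ (t i.castSucc)) / (t i.succ - t i.castSucc)))

theorem sub_eq_setIntegral_Ioc {T : ℝ} {γ γ' : ℝ → ℝ} (hint : IntegrableOn γ' (Icc 0 T))
    (hAC : ∀ t ∈ Icc (0 : ℝ) T, γ t = γ 0 + ∫ s in Ioc (0 : ℝ) t, γ' s) :
    ∀ a b, 0 ≤ a → a ≤ b → b ≤ T → γ b - γ a = ∫ s in Ioc a b, γ' s := by
  intro a b ha hab hb
  rw [hAC b ⟨ha.trans hab, hb⟩, hAC a ⟨ha, hab.trans hb⟩, ← Ioc_union_Ioc_eq_Ioc ha hab,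
    setIntegral_union (Ioc_disjoint_Ioc_of_le le_rfl) measurableSet_Ioc
      (hint.mono_set fun x hx => ⟨hx.1.le, hx.2.trans (hab.trans hb)⟩)
      (hint.mono_set fun x hx => ⟨ha.trans hx.1.le, hx.2.trans hb⟩)]
  ring

theorem partitionSum_le_lintegral {T : ℝ} {γ γ' : ℝ → ℝ} (hint : IntegrableOn γ' (Icc 0 T))
    (hγ : ∀ a b, 0 ≤ a → a ≤ b → b ≤ T → γ b - γ a = ∫ s in Ioc a b, γ' s)
    {n : ℕ} {t : Fin (n + 1) → ℝ} (ht : StrictMono t) (h0 : 0 ≤ t 0)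
    (hT : t (Fin.last n) ≤ T) :
    partitionSum γ t ≤ ∫⁻ s in Icc 0 T, ENNReal.ofReal (rateFunction (γ' s)) := by
  have hmem : ∀ i, t i ∈ Icc 0 T := fun i =>
    ⟨h0.trans (ht.monotone (Fin.zero_le i)), (ht.monotone (Fin.le_last i)).trans hT⟩
  have hsub : ∀ i : Fin n, Ioc (t i.castSucc) (t i.succ) ⊆ Icc 0 T := fun i =>
    Ioc_subset_Icc_self.trans (Icc_subset_Icc (hmem _).1 (hmem _).2)
  have hdisj : Pairwise (Disjoint on fun i : Fin n => Ioc (t i.castSucc) (t i.succ)) :=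
    (pairwise_disjoint_on _).2 fun i j hij =>
      Ioc_disjoint_Ioc_of_le (ht.monotone (Fin.succ_le_castSucc_iff.2 hij))
  calc partitionSum γ t
      ≤ ∑ i : Fin n, ∫⁻ s in Ioc (t i.castSucc) (t i.succ),
          ENNReal.ofReal (rateFunction (γ' s)) := by
        refine Finset.sum_le_sum fun i _ => ?_
        rw [hγ _ _ (hmem _).1 (ht Fin.castSucc_lt_succ).le (hmem _).2]
        exact ofReal_mul_rateFunction_slope_le (ht Fin.castSucc_lt_succ) (hint.mono_set (hsub i))
    _ = ∫⁻ s in ⋃ i : Fin n, Ioc (t i.castSucc) (t i.succ),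
          ENNReal.ofReal (rateFunction (γ' s)) := by
        rw [lintegral_iUnion (fun _ => measurableSet_Ioc) hdisj, tsum_fintype]
    _ ≤ ∫⁻ s in Icc 0 T, ENNReal.ofReal (rateFunction (γ' s)) :=
        lintegral_mono_set (iUnion_subset hsub)

noncomputable def cellAverage (f : ℝ → ℝ) (d : ℝ) (j : ℤ) : ℝ :=
  ⨍ y in Icc (j * d) ((j + 1) * d), f y

theorem cellAverage_eq {f : ℝ → ℝ} {d : ℝ} (hd : 0 < d) (j : ℤ) :
    cellAverage f d j = (∫ y in Ioc (j * d) ((j + 1) * d), f y) / d := by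
  rw [cellAverage, setAverage_eq, Real.volume_real_Icc_of_le (by linarith),
    integral_Icc_eq_integral_Ioc, smul_eq_mul, inv_mul_eq_div]
  ring_nf

theorem floor_div_eq_iff {d : ℝ} (hd : 0 < d) {x : ℝ} {j : ℤ} :
    ⌊x / d⌋ = j ↔ x ∈ Ico (j * d) ((j + 1) * d) := by
  rw [Int.floor_eq_iff, le_div_iff₀ hd, div_lt_iff₀ hd, mem_Ico]

theorem tendsto_cellAverage_floor_div_ae {f : ℝ → ℝ} (hf : LocallyIntegrable f)
    {ι : Type*} {l : Filter ι} {d : ι → ℝ} (hd : Tendsto d l (𝓝[>] 0)) :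
    ∀ᵐ x, Tendsto (fun i => cellAverage f (d i) ⌊x / d i⌋) l (𝓝 (f x)) := by
  filter_upwards [IsUnifLocDoublingMeasure.ae_tendsto_average (μ := volume) hf 1] with x hx
  obtain ⟨hd0, hpos⟩ := tendsto_nhdsWithin_iff.1 hd
  have hball : ∀ i, cellAverage f (d i) ⌊x / d i⌋ =
      ⨍ y in Metric.closedBall ((⌊x / d i⌋ + 1 / 2) * d i) (d i / 2), f y := by
    intro i
    rw [cellAverage, Real.closedBall_eq_Icc]
    ring_nf
  simp_rw [hball]
  refine hx _ _ (tendsto_nhdsWithin_iff.2 ⟨by simpa using hd0.div_const 2,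
    hpos.mono fun i (hi : 0 < d i) => half_pos hi⟩) (hpos.mono fun i hi => ?_)
  have hcell := (floor_div_eq_iff (x := x) hi).1 rfl
  rw [one_mul, Real.closedBall_eq_Icc]
  constructor <;> linarith [hcell.1, hcell.2]

theorem lintegral_Ico_comp_floor_div (φ : ℤ → ENNReal) {d : ℝ} (hd : 0 < d) (n : ℕ) :
    ∫⁻ x in Ico 0 (n * d), φ ⌊x / d⌋ = ∑ i ∈ Finset.range n, ENNReal.ofReal d * φ i := by
  induction n with
  | zero => simp
  | succ n ih =>
    have hcell : ∀ x ∈ Ico ((n : ℤ) * d) (((n : ℤ) + 1) * d), φ ⌊x / d⌋ = φ n :=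
      fun x hx => by rw [(floor_div_eq_iff hd).2 hx]
    push_cast at hcell ⊢
    rw [Finset.sum_range_succ, ← ih,
      ← Ico_union_Ico_eq_Ico (b := n * d) (by positivity) (by nlinarith),
      lintegral_union measurableSet_Ico Ico_disjoint_Ico_same,
      setLIntegral_congr_fun measurableSet_Ico hcell, setLIntegral_const, Real.volume_Ico,
      show ((n : ℝ) + 1) * d - n * d = d by ring, mul_comm (φ n)]

noncomputable def uniformPartition (T : ℝ) (n : ℕ) : Fin (n + 1) → ℝ := fun i => i * (T / n)

theorem uniformPartition_strictMono {T : ℝ} (hT : 0 < T) {n : ℕ} (hn : 0 < n) :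
    StrictMono (uniformPartition T n) := fun _ _ hij =>
  mul_lt_mul_of_pos_right (Nat.cast_lt.2 hij) (by positivity)

theorem uniformPartition_zero (T : ℝ) (n : ℕ) : uniformPartition T n 0 = 0 := by
  simp [uniformPartition]

theorem uniformPartition_last (T : ℝ) {n : ℕ} (hn : n ≠ 0) :
    uniformPartition T n (Fin.last n) = T := by
  simp [uniformPartition, mul_div_cancel₀ T (Nat.cast_ne_zero.2 hn)]

theorem lintegral_cellAverage_eq_partitionSum {T : ℝ} (hT : 0 < T) {γ γ' f : ℝ → ℝ}
    (hf : EqOn f γ' (Icc 0 T))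
    (hγ : ∀ a b, 0 ≤ a → a ≤ b → b ≤ T → γ b - γ a = ∫ s in Ioc a b, γ' s)
    {n : ℕ} (hn : 0 < n) :
    ∫⁻ x in Icc 0 T, ENNReal.ofReal (rateFunction (cellAverage f (T / n) ⌊x / (T / n)⌋)) =
      partitionSum γ (uniformPartition T n) := by
  set d := T / n with hd_def
  have hd : 0 < d := by positivity
  have hnd : (n : ℝ) * d = T := mul_div_cancel₀ T (by positivity)
  have hcell : ∀ i < n, cellAverage f d i = (γ ((i + 1) * d) - γ (i * d)) / d := by
    intro i hi
    have hi' : ((i : ℝ) + 1) * d ≤ T := by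
      rw [← hnd]; gcongr; exact_mod_cast hi
    rw [cellAverage_eq hd, hγ _ _ (by positivity) (by nlinarith) hi']
    push_cast
    congr 1
    refine setIntegral_congr_fun measurableSet_Ioc fun x hx => hf ⟨?_, ?_⟩ <;>
      nlinarith [hx.1, hx.2]
  rw [Measure.restrict_congr_set Ico_ae_eq_Icc.symm, show Ico 0 T = Ico 0 (n * d) by rw [hnd],
    lintegral_Ico_comp_floor_div (fun j => ENNReal.ofReal (rateFunction (cellAverage f d j))) hd,
    partitionSum, ← Fin.sum_univ_eq_sum_range]
  refine Finset.sum_congr rfl fun i _ => ?_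
  simp only [uniformPartition, Fin.val_succ, Fin.val_castSucc, Nat.cast_add, Nat.cast_one,
    ← hd_def]
  rw [hcell i i.isLt, show ((i : ℝ) + 1) * d - i * d = d by ring, ENNReal.ofReal_mul hd.le]

theorem lintegral_rateFunction_le_liminf_partitionSum {T : ℝ} (hT : 0 < T) {γ γ' : ℝ → ℝ}
    (hint : IntegrableOn γ' (Icc 0 T))
    (hγ : ∀ a b, 0 ≤ a → a ≤ b → b ≤ T → γ b - γ a = ∫ s in Ioc a b, γ' s) :
    ∫⁻ s in Icc 0 T, ENNReal.ofReal (rateFunction (γ' s)) ≤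
      liminf (fun n : ℕ => partitionSum γ (uniformPartition T n)) atTop := by
  set f := (Icc 0 T).indicator γ'
  set G : ℕ → ℝ → ENNReal := fun n x =>
    ENNReal.ofReal (rateFunction (cellAverage f (T / n) ⌊x / (T / n)⌋))
  have hmesh : Tendsto (fun n : ℕ => T / n) atTop (𝓝[>] 0) :=
    tendsto_nhdsWithin_iff.2 ⟨tendsto_const_div_atTop_nhds_zero_nat T,
      (eventually_gt_atTop 0).mono fun n (hn : 0 < n) => div_pos hT (Nat.cast_pos.2 hn)⟩
  have hlim : ∀ᵐ x, Tendsto (G · x) atTop (𝓝 (ENNReal.ofReal (rateFunction (f x)))) :=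
    (tendsto_cellAverage_floor_div_ae
      (hint.integrable_indicator measurableSet_Icc).locallyIntegrable hmesh).mono fun x hx =>
      ((ENNReal.continuous_ofReal.comp continuous_rateFunction).tendsto _).comp hx
  have hGmeas : ∀ n, Measurable (G n) := fun n =>
    ENNReal.measurable_ofReal.comp (continuous_rateFunction.measurable.comp
      ((measurable_of_countable (cellAverage f (T / n))).comp
        (Int.measurable_floor.comp (measurable_id.div_const _))))
  calc ∫⁻ s in Icc 0 T, ENNReal.ofReal (rateFunction (γ' s))
      = ∫⁻ s in Icc 0 T, liminf (G · s) atTop := by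
        refine setLIntegral_congr_fun_ae measurableSet_Icc ?_
        filter_upwards [hlim] with x hx hxT
        rw [hx.liminf_eq, show f x = γ' x from indicator_of_mem hxT γ']
    _ ≤ liminf (fun n => ∫⁻ s in Icc 0 T, G n s) atTop := lintegral_liminf_le hGmeas
    _ = liminf (fun n : ℕ => partitionSum γ (uniformPartition T n)) atTop :=
        liminf_congr ((eventually_gt_atTop 0).mono fun n hn =>
          lintegral_cellAverage_eq_partitionSum hT (fun x hx => indicator_of_mem hx γ') hγ hn)

open MeasureTheory ENNReal in
/-- For an absolutely continuous path `γ : [0,T] → ℝ` with derivative `γ'`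
(i.e. `γ(t) = γ(0) + ∫₀ᵗ γ'` with `γ'` integrable), the supremum over finite
partitions `0 = t₀ < ⋯ < t_n = T` of
`∑ (t_{i+1} − t_i)·L((γ(t_{i+1}) − γ(t_i))/(t_{i+1} − t_i))` equals
`∫₀ᵀ L(γ'(s)) ds` in `[0,∞]`, where
`L(v) = v·log((v + √(v² + 4))/2) − √(v² + 4) + 2`. -/
theorem partition_sup_eq_integral (T : ℝ) (hT : 0 < T) (γ γ' : ℝ → ℝ)
    (hint : IntegrableOn γ' (Set.Icc 0 T))
    (hAC : ∀ t ∈ Set.Icc (0 : ℝ) T, γ t = γ 0 + ∫ s in Set.Ioc (0 : ℝ) t, γ' s) :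
    sSup {S : ℝ≥0∞ | ∃ (n : ℕ) (t : Fin (n + 1) → ℝ),
        StrictMono t ∧ t 0 = 0 ∧ t (Fin.last n) = T ∧
        S = ∑ i : Fin n, ENNReal.ofReal ((t i.succ - t i.castSucc) *
          (((γ (t i.succ) - γ (t i.castSucc)) / (t i.succ - t i.castSucc)) *
              Real.log ((((γ (t i.succ) - γ (t i.castSucc)) / (t i.succ - t i.castSucc)) +
                Real.sqrt (((γ (t i.succ) - γ (t i.castSucc)) /
                  (t i.succ - t i.castSucc)) ^ 2 + 4)) / 2) -
            Real.sqrt (((γ (t i.succ) - γ (t i.castSucc)) /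
              (t i.succ - t i.castSucc)) ^ 2 + 4) + 2))} =
      ∫⁻ s in Set.Icc (0 : ℝ) T,
        ENNReal.ofReal (γ' s * Real.log ((γ' s + Real.sqrt (γ' s ^ 2 + 4)) / 2) -
          Real.sqrt (γ' s ^ 2 + 4) + 2) := by
  have hγ := sub_eq_setIntegral_Ioc hint hAC
  change sSup {S | ∃ (n : ℕ) (t : Fin (n + 1) → ℝ), StrictMono t ∧ t 0 = 0 ∧
      t (Fin.last n) = T ∧ S = partitionSum γ t} =
    ∫⁻ s in Icc 0 T, ENNReal.ofReal (rateFunction (γ' s))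
  refine le_antisymm (sSup_le ?_)
    ((lintegral_rateFunction_le_liminf_partitionSum hT hint hγ).trans ?_)
  · rintro _ ⟨n, t, ht, h0, hlast, rfl⟩
    exact partitionSum_le_lintegral hint hγ ht h0.ge hlast.le
  · refine liminf_le_of_frequently_le' (Eventually.frequently ?_)
    filter_upwards [eventually_gt_atTop 0] with n hn
    exact le_sSup ⟨n, _, uniformPartition_strictMono hT hn, uniformPartition_zero T n,
      uniformPartition_last T hn.ne', rfl⟩
end
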